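/- arXiv:2003.11132 — 8 statements merged into one kernel-verified Lean document; each statement's English description precedes it below -/
import Mathlib

section
/- For every integer d ≥ 1, consider the tree ensemble 𝒯_d on ℝ^d consisting of 2d−1 unit-weight trees: for each i ∈ {1,…,d}, a tree t_i whose root splits on feature i with threshold 0, with left leaf labeled class 0 and right leaf labeled class 1; and d−1 further trees each consisting of a single leaf labeled class 1. Then every decision tree T faithful to 𝒯_d on ℝ^d satisfies Φ(T) ≥ d. Since Σ_t Φ(t) = d for this ensemble, the worst-case bound Φ(T) ≤ Σ_{t∈𝒯} Φ(t) on the depth of an optimal born-again tree is tight. -/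
/-- A decision tree on `ℝ^p`: either a leaf labeled with a class `c : ℕ`,
or an internal node splitting on feature `j` with threshold `t`. -/
inductive DTree (p : ℕ) : Type where
  | leaf (c : ℕ) : DTree p
  | node (j : Fin p) (t : ℝ) (L R : DTree p) : DTree p

namespace DTree

/-- Evaluation of a decision tree at a point `x : ℝ^p`. -/
noncomputable def eval {p : ℕ} : DTree p → (Fin p → ℝ) → ℕ
  | leaf c, _ => c
  | node j t L R, x => if x j ≤ t then L.eval x else R.eval x

/-- Depth `Φ(T)` of a decision tree. -/
def depth {p : ℕ} : DTree p → ℕ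
  | leaf _ => 0
  | node _ _ L R => 1 + max L.depth R.depth

/-- Number of leaves `L(T)` of a decision tree. -/
def leaves {p : ℕ} : DTree p → ℕ
  | leaf _ => 1
  | node _ _ L R => L.leaves + R.leaves

/-- The set of splits `(j, t)` occurring at internal nodes of a tree. -/
def splits {p : ℕ} : DTree p → Set (Fin p × ℝ)
  | leaf _ => ∅
  | node j t L R => insert (j, t) (L.splits ∪ R.splits)

end DTree

/-- A tree ensemble: a finite nonempty family of decision trees with positive weights. -/
structure Ensemble (p : ℕ) : Type where
  m : ℕ
  m_pos : 0 < m
  tree : Fin m → DTree p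
  weight : Fin m → ℝ
  weight_pos : ∀ i, 0 < weight i

namespace Ensemble

/-- Total weight of the trees voting for class `c` at point `x`. -/
noncomputable def score {p : ℕ} (E : Ensemble p) (x : Fin p → ℝ) (c : ℕ) : ℝ :=
  ∑ i ∈ Finset.univ.filter (fun i => (E.tree i).eval x = c), E.weight i

/-- The decision function of the ensemble: the smallest class maximizing the weighted vote. -/
noncomputable def F {p : ℕ} (E : Ensemble p) (x : Fin p → ℝ) : ℕ :=
  sInf {c : ℕ | ∀ c' : ℕ, E.score x c' ≤ E.score x c}

/-- The set `H j` of thresholds appearing in splits on feature `j` in trees of the ensemble. -/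
def H {p : ℕ} (E : Ensemble p) (j : Fin p) : Set ℝ :=
  {t : ℝ | ∃ i, (j, t) ∈ (E.tree i).splits}

end Ensemble

/-- `T` is faithful to the ensemble `E` on the set `S`. -/
def Faithful {p : ℕ} (T : DTree p) (E : Ensemble p) (S : Set (Fin p → ℝ)) : Prop :=
  ∀ x ∈ S, T.eval x = E.F x

/-- The ensemble `𝒯_d` on `ℝ^d` with `2d − 1` unit-weight trees: for each `i < d`, a tree
splitting on feature `i` at threshold `0` with left leaf of class `0` and right leaf of
class `1`; plus `d − 1` single-leaf trees of class `1`. -/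
def axisEnsemble (d : ℕ) (hd : 1 ≤ d) : Ensemble d where
  m := 2 * d - 1
  m_pos := by omega
  tree := fun i =>
    if h : (i : ℕ) < d then DTree.node ⟨i, h⟩ 0 (DTree.leaf 0) (DTree.leaf 1)
    else DTree.leaf 1
  weight := fun _ => 1
  weight_pos := fun _ => one_pos

/-!
On the points `x ≥ 0` of `ℝ^d` the ensemble `𝒯_d` computes the OR of the bits `0 < x i`:
its `d` split trees vote `0` exactly at the coordinates with `x i ≤ 0`, and the `d - 1`
constant trees tip the balance towards class `1` as soon as one coordinate is positive.
A decision tree computing this OR must query every coordinate on the path of the origin: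
a split `x j ≤ t` with `0 ≤ t` sends all points with `x j = 0` to the left and so only
eliminates coordinate `j`, while a split with `t < 0` sends the whole orthant to the right.
-/

open Finset

namespace Ensemble

variable {p : ℕ} (E : Ensemble p) (x : Fin p → ℝ)

theorem F_eq_of_score_lt {c : ℕ} (h : ∀ c' ≠ c, E.score x c' < E.score x c) : E.F x = c := by
  suffices hmax : {c'' : ℕ | ∀ c' : ℕ, E.score x c' ≤ E.score x c''} = {c} by
    rw [F, hmax, csInf_singleton]
  ext c''
  refine ⟨fun hc'' => ?_, ?_⟩
  · by_contra hne
    exact (h c'' hne).not_ge (hc'' c)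
  · rintro rfl c'
    rcases eq_or_ne c' c'' with rfl | hne
    · exact le_rfl
    · exact (h c' hne).le

theorem score_eq_card (hw : ∀ i, E.weight i = 1) (c : ℕ) :
    E.score x c = #{i | (E.tree i).eval x = c} := by
  simp [score, hw]

end Ensemble

theorem DTree.card_le_depth_of_eval_eq {p a b : ℕ} (hab : a ≠ b) (T : DTree p)
    (s : Finset (Fin p))
    (hT : ∀ x : Fin p → ℝ, (∀ i, 0 ≤ x i) → (∀ i ∉ s, x i = 0) →
      T.eval x = if ∀ i, x i ≤ 0 then a else b) :
    #s ≤ T.depth := by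
  induction T generalizing s with
  | leaf c =>
    obtain rfl | ⟨j, hj⟩ := s.eq_empty_or_nonempty
    · simp
    exfalso
    have hzero := hT 0 (fun _ => le_rfl) fun _ _ => rfl
    have hsingle := hT (Pi.single j 1) (fun i => by rw [Pi.single_apply]; split_ifs <;> norm_num)
      fun i hi => Pi.single_eq_of_ne (ne_of_mem_of_not_mem hj hi).symm _
    have hpos : ¬ ∀ i, (Pi.single j 1 : Fin p → ℝ) i ≤ 0 := fun h => (h j).not_gt (by simp)
    simp only [DTree.eval, Pi.zero_apply, le_refl, implies_true, if_true, hpos, if_false]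
      at hzero hsingle
    exact hab (hzero.symm.trans hsingle)
  | node j t L R ihL ihR =>
    simp only [DTree.depth]
    rcases le_or_gt 0 t with ht | ht
    · have hL := ihL (s.erase j) fun x hx hxs => by
        have hxj : x j ≤ t := (hxs j (notMem_erase j s)).le.trans ht
        rw [← hT x hx fun i hi => hxs i (mt mem_of_mem_erase hi), DTree.eval, if_pos hxj]
      have := pred_card_le_card_erase (s := s) (a := j)
      omega
    · have hR := ihR s fun x hx hxs => by
        have hxj : ¬ x j ≤ t := fun h => (h.trans_lt ht).not_ge (hx j)
        rw [← hT x hx hxs, DTree.eval, if_neg hxj]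
      omega

section axisEnsemble

variable {d : ℕ} (hd : 1 ≤ d) (x : Fin d → ℝ)

theorem axisEnsemble_card_split_trees : #{i : Fin (axisEnsemble d hd).m | (i : ℕ) < d} = d := by
  rw [Fin.card_filter_val_lt]
  exact min_eq_right (show d ≤ 2 * d - 1 by omega)

theorem axisEnsemble_tree_eval_eq_zero_iff (i : Fin (axisEnsemble d hd).m) :
    ((axisEnsemble d hd).tree i).eval x = 0 ↔ ∃ h : (i : ℕ) < d, x ⟨i, h⟩ ≤ 0 := by
  dsimp only [axisEnsemble]
  split_ifs with h <;> simp [DTree.eval, h]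

theorem axisEnsemble_tree_eval_le_one (i : Fin (axisEnsemble d hd).m) :
    ((axisEnsemble d hd).tree i).eval x ≤ 1 := by
  dsimp only [axisEnsemble]
  split_ifs with h
  · simp only [DTree.eval]
    split_ifs <;> simp
  · simp [DTree.eval]

theorem axisEnsemble_card_voters_zero_add_one :
    #{i | ((axisEnsemble d hd).tree i).eval x = 0} +
      #{i | ((axisEnsemble d hd).tree i).eval x = 1} = 2 * d - 1 := by
  have hvote : ∀ i, ((axisEnsemble d hd).tree i).eval x = 1 ↔
      ¬ ((axisEnsemble d hd).tree i).eval x = 0 := fun i => by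
    have := axisEnsemble_tree_eval_le_one hd x i
    omega
  simp only [hvote, card_filter_add_card_filter_not, card_univ, Fintype.card_fin]
  rfl

theorem axisEnsemble_card_voters_eq_zero_of_one_lt {c : ℕ} (hc : 1 < c) :
    #{i | ((axisEnsemble d hd).tree i).eval x = c} = 0 := by
  rw [card_eq_zero, filter_eq_empty_iff]
  intro i _
  have := axisEnsemble_tree_eval_le_one hd x i
  omega

theorem axisEnsemble_card_voters_zero_of_nonpos (hx : ∀ i, x i ≤ 0) :
    #{i | ((axisEnsemble d hd).tree i).eval x = 0} = d := by
  have hvoters : ∀ i, ((axisEnsemble d hd).tree i).eval x = 0 ↔ (i : ℕ) < d := fun i => by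
    rw [axisEnsemble_tree_eval_eq_zero_iff]
    exact ⟨fun ⟨h, _⟩ => h, fun h => ⟨h, hx _⟩⟩
  simp only [hvoters, axisEnsemble_card_split_trees]

theorem axisEnsemble_card_voters_zero_lt_of_not_nonpos (hx : ¬ ∀ i, x i ≤ 0) :
    #{i | ((axisEnsemble d hd).tree i).eval x = 0} < d := by
  push Not at hx
  obtain ⟨j, hj⟩ := hx
  let j' : Fin (axisEnsemble d hd).m := ⟨j, show (j : ℕ) < 2 * d - 1 by omega⟩
  have hsub : ({i | ((axisEnsemble d hd).tree i).eval x = 0} : Finset _) ⊆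
      ({i | (i : ℕ) < d} : Finset (Fin (axisEnsemble d hd).m)).erase j' := by
    intro i
    simp only [mem_filter, mem_univ, true_and, mem_erase, axisEnsemble_tree_eval_eq_zero_iff]
    rintro ⟨h, hxi⟩
    refine ⟨?_, h⟩
    rintro rfl
    exact hxi.not_gt hj
  calc _ ≤ _ := card_le_card hsub
    _ < #{i : Fin (axisEnsemble d hd).m | (i : ℕ) < d} := card_erase_lt_of_mem (by simp [j'])
    _ = d := axisEnsemble_card_split_trees hd

theorem axisEnsemble_F : (axisEnsemble d hd).F x = if ∀ i, x i ≤ 0 then 0 else 1 := by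
  have hsum := axisEnsemble_card_voters_zero_add_one hd x
  apply Ensemble.F_eq_of_score_lt
  intro c hc
  simp only [Ensemble.score_eq_card (axisEnsemble d hd) x (fun _ => rfl)]
  norm_cast
  split_ifs at hc ⊢ with hx
  · have hzero := axisEnsemble_card_voters_zero_of_nonpos hd x hx
    rcases (by omega : c = 1 ∨ 1 < c) with rfl | hc
    · omega
    · rw [axisEnsemble_card_voters_eq_zero_of_one_lt hd x hc]
      omega
  · have hzero := axisEnsemble_card_voters_zero_lt_of_not_nonpos hd x hx
    rcases (by omega : c = 0 ∨ 1 < c) with rfl | hc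
    · omega
    · rw [axisEnsemble_card_voters_eq_zero_of_one_lt hd x hc]
      omega

theorem axisEnsemble_sum_depth : ∑ i, ((axisEnsemble d hd).tree i).depth = d := by
  have hdepth : ∀ i, ((axisEnsemble d hd).tree i).depth = if (i : ℕ) < d then 1 else 0 := by
    intro i
    dsimp only [axisEnsemble]
    split_ifs <;> simp [DTree.depth]
  rw [sum_congr rfl fun i _ => hdepth i, sum_boole, Nat.cast_id,
    axisEnsemble_card_split_trees]

end axisEnsemble

/-- Every decision tree faithful to `𝒯_d` on `ℝ^d` has depth at least `d`;
moreover the sum of the depths of the trees of `𝒯_d` equals `d`, so the worst-case bound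
`Φ(T) ≤ Σ_t Φ(t)` is tight. -/
theorem axis_ensemble_depth_tight (d : ℕ) (hd : 1 ≤ d) :
    (∀ T : DTree d, Faithful T (axisEnsemble d hd) Set.univ → d ≤ T.depth) ∧
    (∑ i, ((axisEnsemble d hd).tree i).depth = d) := by
  refine ⟨fun T hT => ?_, axisEnsemble_sum_depth hd⟩
  simpa using T.card_le_depth_of_eval_eq zero_ne_one univ fun x _ _ =>
    (hT x trivial).trans (axisEnsemble_F hd x)
end

section
/- Let d ≥ 1 and let T be a decision tree on ℝ^d such that F_T(x) = 0 whenever x_i ≤ 0 for all i ∈ {1,…,d}, and F_T(x) = 1 otherwise. Then the depth of T satisfies Φ(T) ≥ d. -/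
/-!
Only the features tested on the root-to-leaf path of a point `x` can matter at `x`: changing any
other coordinate leaves that path, hence the value, unchanged. Raising a single coordinate of the
origin changes the value from `0` to `1`, so all `d` features are tested on the origin's path, which
has at most `Φ(T)` nodes.
-/

namespace DTree

variable {p : ℕ}

noncomputable def pathFeatures : DTree p → (Fin p → ℝ) → Finset (Fin p)
  | leaf _, _ => ∅
  | node j t L R, x => insert j (if x j ≤ t then L.pathFeatures x else R.pathFeatures x)

theorem card_pathFeatures_le_depth (T : DTree p) (x : Fin p → ℝ) :
    (T.pathFeatures x).card ≤ T.depth := by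
  induction T with
  | leaf c => simp [pathFeatures, depth]
  | node j t L R ihL ihR =>
    simp only [pathFeatures, depth]
    refine (Finset.card_insert_le _ _).trans ?_
    split_ifs <;> omega

theorem eval_update_of_notMem_pathFeatures (T : DTree p) {x : Fin p → ℝ} {j : Fin p}
    (hj : j ∉ T.pathFeatures x) (y : ℝ) : T.eval (Function.update x j y) = T.eval x := by
  induction T with
  | leaf c => rfl
  | node k t L R ihL ihR =>
    simp only [pathFeatures, Finset.mem_insert, not_or] at hj
    obtain ⟨hjk, hj⟩ := hj
    simp only [eval, Function.update_of_ne (Ne.symm hjk)]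
    split_ifs at hj ⊢ with hx
    · exact ihL hj
    · exact ihR hj

theorem mem_pathFeatures_of_eval_update_ne (T : DTree p) {x : Fin p → ℝ} {j : Fin p} {y : ℝ}
    (h : T.eval (Function.update x j y) ≠ T.eval x) : j ∈ T.pathFeatures x :=
  by_contra fun hj => h (T.eval_update_of_notMem_pathFeatures hj y)

end DTree

theorem conjunction_tree_depth_lower_bound_general (d : ℕ) (T : DTree d)
    (h0 : ∀ x : Fin d → ℝ, (∀ i, x i ≤ 0) → T.eval x = 0)
    (h1 : ∀ x : Fin d → ℝ, ¬ (∀ i, x i ≤ 0) → T.eval x = 1) :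
    d ≤ T.depth := by
  have hsens (j : Fin d) : T.eval (Function.update 0 j 1) ≠ T.eval 0 := by
    rw [h0 0 fun _ => le_rfl, h1 _ fun hle => absurd (hle j) (by simp)]
    exact one_ne_zero
  have htested : Finset.univ ⊆ T.pathFeatures 0 := fun j _ =>
    T.mem_pathFeatures_of_eval_update_ne (hsens j)
  calc d = (Finset.univ : Finset (Fin d)).card := (Finset.card_fin d).symm
    _ ≤ (T.pathFeatures 0).card := Finset.card_le_card htested
    _ ≤ T.depth := T.card_pathFeatures_le_depth 0

/-- If a decision tree on `ℝ^d` evaluates to `0` exactly on the points with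
all coordinates `≤ 0` and to `1` elsewhere, then its depth is at least `d`. -/
theorem conjunction_tree_depth_lower_bound (d : ℕ) (hd : 1 ≤ d) (T : DTree d)
    (h0 : ∀ x : Fin d → ℝ, (∀ i, x i ≤ 0) → T.eval x = 0)
    (h1 : ∀ x : Fin d → ℝ, ¬ (∀ i, x i ≤ 0) → T.eval x = 1) :
    d ≤ T.depth :=
  conjunction_tree_depth_lower_bound_general d T h0 h1
end

section
/- Let 𝒯 = {t_1,…,t_m} be a tree ensemble on ℝ^p. Then there exists a decision tree T faithful to 𝒯 on all of ℝ^p whose number of leaves satisfies L(T) ≤ ∏_{i=1}^m L(t_i). -/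
/-!
Grafting a copy of the next tree onto every leaf of the current one yields a tree whose leaves
record the output of every tree of the ensemble, hence determine the weighted vote; each
grafting step multiplies the number of leaves by at most that of the grafted tree.
-/

namespace DTree

variable {p : ℕ}

def bind : DTree p → (ℕ → DTree p) → DTree p
  | leaf c, f => f c
  | node j t L R, f => node j t (L.bind f) (R.bind f)

theorem eval_bind (T : DTree p) (f : ℕ → DTree p) (x : Fin p → ℝ) :
    (T.bind f).eval x = (f (T.eval x)).eval x := by
  induction T with
  | leaf c => rfl
  | node j t L R hL hR =>
    simp only [bind, eval]
    split_ifs <;> assumption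

theorem leaves_bind_le (T : DTree p) (f : ℕ → DTree p) {B : ℕ} (hf : ∀ c, (f c).leaves ≤ B) :
    (T.bind f).leaves ≤ T.leaves * B := by
  induction T with
  | leaf c => simpa [bind, leaves] using hf c
  | node j t L R hL hR =>
    simp only [bind, leaves, add_mul]
    omega

theorem exists_eval_eq_comp_leaves_le_prod {n : ℕ} (t : Fin n → DTree p)
    (G : (Fin n → ℕ) → ℕ) :
    ∃ T : DTree p, (∀ x, T.eval x = G fun i => (t i).eval x) ∧ T.leaves ≤ ∏ i, (t i).leaves := by
  induction n with
  | zero =>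
    exact ⟨leaf (G Fin.elim0), fun _ => congrArg G (Subsingleton.elim _ _), by simp [leaves]⟩
  | succ n ih =>
    choose T hT hL using fun c => ih (Fin.tail t) fun v => G (Fin.cons c v)
    refine ⟨(t 0).bind T, fun x => ?_, ?_⟩
    · rw [eval_bind, hT]
      exact congrArg G (Fin.cons_self_tail fun i => (t i).eval x)
    · rw [Fin.prod_univ_succ]
      exact leaves_bind_le _ _ hL

end DTree

noncomputable def Ensemble.vote {p : ℕ} (E : Ensemble p) (v : Fin E.m → ℕ) : ℕ :=
  sInf {c : ℕ | ∀ c' : ℕ, ∑ i ∈ Finset.univ.filter (fun i => v i = c'), E.weight i ≤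
    ∑ i ∈ Finset.univ.filter (fun i => v i = c), E.weight i}

theorem Ensemble.F_eq_vote {p : ℕ} (E : Ensemble p) (x : Fin p → ℝ) :
    E.F x = E.vote fun i => (E.tree i).eval x :=
  rfl

/-- There exists a decision tree faithful to the ensemble on all of `ℝ^p`
whose number of leaves is at most the product of the numbers of leaves of its trees. -/
theorem born_again_leaves_upper_bound {p : ℕ} (E : Ensemble p) :
    ∃ T : DTree p, Faithful T E Set.univ ∧ T.leaves ≤ ∏ i, (E.tree i).leaves := by
  obtain ⟨T, hT, hL⟩ := DTree.exists_eval_eq_comp_leaves_le_prod E.tree E.vote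
  exact ⟨T, fun x _ => (hT x).trans (E.F_eq_vote x).symm, hL⟩
end

section
/- Let 𝒯 be a tree ensemble on ℝ^p and, for each feature j, let H_j be the set of thresholds appearing in splits on feature j in trees of 𝒯. For every decision tree T faithful to 𝒯 on ℝ^p there exists a decision tree T′ faithful to 𝒯 on ℝ^p such that every split (j,h) of T′ satisfies h ∈ H_j, and Φ(T′) ≤ Φ(T) and L(T′) ≤ L(T). In particular, an optimal born-again tree can be constructed using exclusively the hyperplanes of the sets H_j. -/
/-!
Snap every coordinate `x j` up to the least ensemble threshold `t ∈ H j` with `x j ≤ t` (or to a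
point above all of `H j` if there is none). The snapped point lies on the same side of every
ensemble split as `x`, so the ensemble takes the same value there. Conversely, for a split `(j, h)`
of `T` the snapped coordinate satisfies `≤ h` either always, never, or exactly when `x j ≤ t` for
the largest `t ∈ H j` below `h`. Replacing each split of `T` accordingly (by its left subtree, its
right subtree, or the split `(j, t)`) gives a tree no deeper and with no more leaves that evaluates
at `x` as `T` does at the snapped point, hence as the ensemble does at `x`.
-/

namespace Finset

variable {α : Type*} [LinearOrder α]

noncomputable def ceilIn (S : Finset α) (top a : α) : α :=
  if h : {s ∈ S | a ≤ s}.Nonempty then {s ∈ S | a ≤ s}.min' h else top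

variable {S : Finset α} {top : α}

theorem ceilIn_mem_insert (a : α) : S.ceilIn top a ∈ insert top S := by
  unfold ceilIn
  split_ifs with h
  · exact mem_insert_of_mem (mem_filter.1 (min'_mem _ h)).1
  · exact mem_insert_self top S

theorem ceilIn_le_top (hS : ∀ s ∈ S, s < top) (a : α) : S.ceilIn top a ≤ top := by
  rcases mem_insert.1 (ceilIn_mem_insert a : S.ceilIn top a ∈ _) with h | h
  · exact h.le
  · exact (hS _ h).le

theorem ceilIn_le_iff (hS : ∀ s ∈ S, s < top) {t : α} (ht : t ∈ S) (a : α) :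
    S.ceilIn top a ≤ t ↔ a ≤ t := by
  unfold ceilIn
  split_ifs with h
  · exact ⟨fun hle => (mem_filter.1 (min'_mem _ h)).2.trans hle,
      fun hat => min'_le _ _ (mem_filter.2 ⟨ht, hat⟩)⟩
  · exact ⟨fun hle => absurd hle (hS t ht).not_ge,
      fun hat => absurd ⟨t, mem_filter.2 ⟨ht, hat⟩⟩ h⟩

theorem ceilIn_le_trichotomy (hS : ∀ s ∈ S, s < top) (h : α) :
    (∀ a, S.ceilIn top a ≤ h) ∨ (∀ a, h < S.ceilIn top a) ∨
      ∃ t ∈ S, ∀ a, S.ceilIn top a ≤ h ↔ a ≤ t := by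
  by_cases htop : top ≤ h
  · exact Or.inl fun a => (ceilIn_le_top hS a).trans htop
  have hvalue (a : α) : S.ceilIn top a ≤ h → S.ceilIn top a ∈ {s ∈ S | s ≤ h} := fun hle =>
    mem_filter.2 ⟨(mem_insert.1 (ceilIn_mem_insert a)).resolve_left
      fun heq => htop (heq ▸ hle), hle⟩
  by_cases hne : {s ∈ S | s ≤ h}.Nonempty
  · obtain ⟨htS, hth⟩ := mem_filter.1 (max'_mem _ hne)
    refine Or.inr (Or.inr ⟨_, htS, fun a => ?_⟩)
    rw [← ceilIn_le_iff hS htS]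
    exact ⟨fun hle => le_max' _ _ (hvalue a hle), fun hle => hle.trans hth⟩
  · exact Or.inr (Or.inl fun a => not_le.1 fun hle => hne ⟨_, hvalue a hle⟩)

end Finset

theorem Set.Finite.exists_snap {α : Type*} [LinearOrder α] [NoMaxOrder α] [Nonempty α]
    {H : Set α} (hH : H.Finite) :
    ∃ f : α → α, (∀ t ∈ H, ∀ a, f a ≤ t ↔ a ≤ t) ∧
      ∀ h, (∀ a, f a ≤ h) ∨ (∀ a, h < f a) ∨ ∃ t ∈ H, ∀ a, f a ≤ h ↔ a ≤ t := by
  lift H to Finset α using hH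
  obtain ⟨M, hM⟩ := H.exists_le
  obtain ⟨top, htop⟩ := exists_gt M
  have hH : ∀ s ∈ H, s < top := fun s hs => (hM s hs).trans_lt htop
  exact ⟨H.ceilIn top, fun t ht => Finset.ceilIn_le_iff hH ht, Finset.ceilIn_le_trichotomy hH⟩

namespace DTree

variable {p : ℕ}

def SplitsIn (H : Fin p → Set ℝ) (T : DTree p) : Prop :=
  ∀ j t, (j, t) ∈ T.splits → t ∈ H j

variable {H : Fin p → Set ℝ}

@[simp]
theorem splitsIn_leaf (c : ℕ) : (leaf c).SplitsIn H := fun _ _ h => h.elim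

@[simp]
theorem splitsIn_node {j : Fin p} {t : ℝ} {L R : DTree p} :
    (node j t L R).SplitsIn H ↔ t ∈ H j ∧ L.SplitsIn H ∧ R.SplitsIn H := by
  simp only [SplitsIn, splits, Set.mem_insert_iff, Set.mem_union, Prod.mk.injEq]
  constructor
  · intro h
    exact ⟨h j t (Or.inl ⟨rfl, rfl⟩), fun j' t' h' => h j' t' (Or.inr (Or.inl h')),
      fun j' t' h' => h j' t' (Or.inr (Or.inr h'))⟩
  · rintro ⟨ht, hL, hR⟩ j' t' (⟨rfl, rfl⟩ | h' | h')
    exacts [ht, hL j' t' h', hR j' t' h']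

theorem splits_finite (T : DTree p) : T.splits.Finite := by
  induction T with
  | leaf c => exact Set.finite_empty
  | node j t L R ihL ihR => exact (ihL.union ihR).insert (j, t)

theorem SplitsIn.eval_comp {T : DTree p} (hT : T.SplitsIn H) {f : Fin p → ℝ → ℝ}
    (hf : ∀ j, ∀ t ∈ H j, ∀ a, f j a ≤ t ↔ a ≤ t) (x : Fin p → ℝ) :
    T.eval (fun j => f j (x j)) = T.eval x := by
  induction T with
  | leaf c => rfl
  | node j t L R ihL ihR =>
    obtain ⟨ht, hL, hR⟩ := splitsIn_node.1 hT
    simp only [eval, hf j t ht, ihL hL, ihR hR]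

theorem exists_splitsIn_eval_comp {f : Fin p → ℝ → ℝ}
    (hf : ∀ j h, (∀ a, f j a ≤ h) ∨ (∀ a, h < f j a) ∨ ∃ t ∈ H j, ∀ a, f j a ≤ h ↔ a ≤ t)
    (T : DTree p) :
    ∃ T' : DTree p, T'.SplitsIn H ∧ T'.depth ≤ T.depth ∧ T'.leaves ≤ T.leaves ∧
      ∀ x, T'.eval x = T.eval (fun j => f j (x j)) := by
  induction T with
  | leaf c => exact ⟨leaf c, splitsIn_leaf c, le_rfl, le_rfl, fun _ => rfl⟩
  | node j h L R ihL ihR =>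
    obtain ⟨L', hLs, hLd, hLl, hLe⟩ := ihL
    obtain ⟨R', hRs, hRd, hRl, hRe⟩ := ihR
    simp only [depth, leaves, eval]
    rcases hf j h with hleft | hright | ⟨t, ht, hiff⟩
    · exact ⟨L', hLs, by omega, by omega, fun x => by rw [if_pos (hleft _), hLe]⟩
    · exact ⟨R', hRs, by omega, by omega, fun x => by rw [if_neg (hright _).not_ge, hRe]⟩
    · refine ⟨node j t L' R', splitsIn_node.2 ⟨ht, hLs, hRs⟩, by simp only [depth]; omega,
        by simp only [leaves]; omega, fun x => ?_⟩
      simp only [eval, hiff, hLe, hRe]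

end DTree

namespace Ensemble

variable {p : ℕ} (E : Ensemble p)

theorem tree_splitsIn_H (i : Fin E.m) : (E.tree i).SplitsIn E.H := fun _ _ h => ⟨i, h⟩

theorem H_finite (j : Fin p) : (E.H j).Finite :=
  (Set.finite_iUnion fun i => ((E.tree i).splits_finite.image Prod.snd)).subset
    fun t ⟨i, hi⟩ => Set.mem_iUnion.2 ⟨i, (j, t), hi, rfl⟩

variable {E}

theorem F_congr {x y : Fin p → ℝ} (h : ∀ i, (E.tree i).eval y = (E.tree i).eval x) :
    E.F y = E.F x := by
  have hscore (c : ℕ) : E.score y c = E.score x c := by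
    simp only [score, h]
  simp only [F, hscore]

end Ensemble

/-- For every decision tree `T` faithful to the ensemble on `ℝ^p`, there is
a decision tree `T'`, faithful to the ensemble on `ℝ^p`, all of whose splits use thresholds
from the ensemble's threshold sets `H j`, with `Φ(T') ≤ Φ(T)` and `L(T') ≤ L(T)`. -/
theorem born_again_uses_ensemble_hyperplanes {p : ℕ} (E : Ensemble p) (T : DTree p)
    (hT : Faithful T E Set.univ) :
    ∃ T' : DTree p, Faithful T' E Set.univ ∧
      (∀ j : Fin p, ∀ t : ℝ, (j, t) ∈ T'.splits → t ∈ E.H j) ∧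
      T'.depth ≤ T.depth ∧ T'.leaves ≤ T.leaves := by
  choose f hf_side hf_sublevel using fun j => (E.H_finite j).exists_snap
  obtain ⟨T', hsplits, hdepth, hleaves, heval⟩ := DTree.exists_splitsIn_eval_comp hf_sublevel T
  refine ⟨T', fun x _ => ?_, hsplits, hdepth, hleaves⟩
  rw [heval, hT _ trivial]
  exact Ensemble.F_congr fun i => (E.tree_splitsIn_H i).eval_comp hf_side x
end

section
/- Let 𝒯 be a tree ensemble on ℝ^p with threshold sets H_j, and let T be a decision tree each of whose splits (j,h) satisfies h ∈ H_j. If for every cell z there exists at least one point x in the open box B(z) with F_T(x) = F_𝒯(x), then T is faithful to 𝒯 on all of ℝ^p. -/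
/-- A cell: for each feature `j`, an index in `{0, …, n j}` (0-indexed version of `{1, …, |H_j|+1}`). -/
abbrev Cell {p : ℕ} (n : Fin p → ℕ) : Type := ∀ j, Fin (n j + 1)

/-- The open box `B(z)` associated with a cell `z`, given for each feature `j` the
increasing enumeration `h j : Fin (n j) → ℝ` of the thresholds: `x j` lies strictly above
every threshold of index `< z j` and strictly below every threshold of index `≥ z j`. -/
def Box {p : ℕ} (n : Fin p → ℕ) (h : ∀ j, Fin (n j) → ℝ) (z : Cell n) : Set (Fin p → ℝ) :=
  {x | ∀ j, (∀ k : Fin (n j), (k : ℕ) < (z j : ℕ) → h j k < x j) ∧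
            (∀ k : Fin (n j), (z j : ℕ) ≤ (k : ℕ) → x j < h j k)}

/-- The cell `z` is enclosed in the region `(zL, zR)`. -/
def Encl {p : ℕ} {n : Fin p → ℕ} (zL zR z : Cell n) : Prop :=
  ∀ j, (zL j : ℕ) ≤ (z j : ℕ) ∧ (z j : ℕ) ≤ (zR j : ℕ)

/-- The subset of `ℝ^p` covered by the region `(zL, zR)`: the union of the boxes of the
cells it encloses. -/
def RegionSet {p : ℕ} (n : Fin p → ℕ) (h : ∀ j, Fin (n j) → ℝ) (zL zR : Cell n) :
    Set (Fin p → ℝ) :=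
  ⋃ z ∈ {z : Cell n | Encl zL zR z}, Box n h z

/-- `Φ(zL, zR)`: the minimum depth of a decision tree faithful to `E` on the region `(zL, zR)`. -/
noncomputable def Phi {p : ℕ} (E : Ensemble p) (n : Fin p → ℕ) (h : ∀ j, Fin (n j) → ℝ)
    (zL zR : Cell n) : ℕ :=
  sInf {d : ℕ | ∃ T : DTree p, Faithful T E (RegionSet n h zL zR) ∧ T.depth = d}

/-- `Λ(zL, zR)`: the minimum number of leaves of a decision tree faithful to `E` on `(zL, zR)`. -/
noncomputable def Lam {p : ℕ} (E : Ensemble p) (n : Fin p → ℕ) (h : ∀ j, Fin (n j) → ℝ)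
    (zL zR : Cell n) : ℕ :=
  sInf {d : ℕ | ∃ T : DTree p, Faithful T E (RegionSet n h zL zR) ∧ T.leaves = d}

/-- `z^R_{jl}`: replace the `j`-th coordinate of `zR` by `l`. -/
def splitR {p : ℕ} {n : Fin p → ℕ} (zR : Cell n) (j : Fin p) (l : Fin (n j)) : Cell n :=
  Function.update zR j l.castSucc

/-- `z^L_{jl}`: replace the `j`-th coordinate of `zL` by `l + 1`. -/
def splitL {p : ℕ} {n : Fin p → ℕ} (zL : Cell n) (j : Fin p) (l : Fin (n j)) : Cell n :=
  Function.update zL j l.succ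

/-- The cells `z` and `z'` have the same (weighted majority) class under `E`. -/
def SameClass {p : ℕ} (E : Ensemble p) (n : Fin p → ℕ) (h : ∀ j, Fin (n j) → ℝ)
    (z z' : Cell n) : Prop :=
  ∀ x ∈ Box n h z, ∀ y ∈ Box n h z', E.F x = E.F y

open Classical in
/-- The indicator `𝟙_{jl}(z^L, z^R)`. -/
noncomputable def ind {p : ℕ} (E : Ensemble p) (n : Fin p → ℕ) (h : ∀ j, Fin (n j) → ℝ)
    (zL zR : Cell n) (j : Fin p) (l : Fin (n j)) : ℕ :=
  if Phi E n h zL (splitR zR j l) = 0 ∧ Phi E n h (splitL zL j l) zR = 0 ∧ SameClass E n h zL zR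
  then 0 else 1

/-!
Decision trees only compare coordinates with their thresholds, so both `T` and the ensemble are
constant on each class of points that sit on the same side of every threshold in `H`. Every point
`x` of `ℝ^p` (also one lying on a threshold) is in the class of the points of some open box: put
`z j` at the first threshold `≥ x j`. The point of that box where `T` and the ensemble agree then
transfers the agreement to `x`.
-/

theorem DTree.eval_eq_of_forall_mem_splits {p : ℕ} {x y : Fin p → ℝ} :
    ∀ T : DTree p, (∀ s ∈ T.splits, x s.1 ≤ s.2 ↔ y s.1 ≤ s.2) → T.eval x = T.eval y
  | leaf _, _ => rfl
  | node j t L R, hxy => by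
    have hL := L.eval_eq_of_forall_mem_splits fun s hs => hxy s (by simp [splits, hs])
    have hR := R.eval_eq_of_forall_mem_splits fun s hs => hxy s (by simp [splits, hs])
    simp only [eval, hxy (j, t) (by simp [splits]), hL, hR]

theorem Ensemble.F_eq_of_forall_mem_H {p : ℕ} (E : Ensemble p) {x y : Fin p → ℝ}
    (hxy : ∀ j, ∀ t ∈ E.H j, x j ≤ t ↔ y j ≤ t) : E.F x = E.F y := by
  have heval (i : Fin E.m) : (E.tree i).eval x = (E.tree i).eval y :=
    (E.tree i).eval_eq_of_forall_mem_splits fun s hs => hxy s.1 s.2 ⟨i, hs⟩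
  have hscore : E.score x = E.score y := by
    funext c
    simp only [score, heval]
  simp only [F, hscore]

theorem Monotone.exists_forall_le_apply_iff_le {α : Type*} [Preorder α] {m : ℕ}
    {f : Fin m → α} (hf : Monotone f) (a : α) :
    ∃ i : Fin (m + 1), ∀ k : Fin m, a ≤ f k ↔ (i : ℕ) ≤ k := by
  classical
  have hm : ∀ k : Fin m, m ≤ k → a ≤ f k := fun k hk => absurd k.isLt hk.not_gt
  have hex : ∃ i : ℕ, ∀ k : Fin m, i ≤ k → a ≤ f k := ⟨m, hm⟩
  have hi : Nat.find hex < m + 1 := Nat.lt_succ_of_le (Nat.find_min' hex hm)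
  refine ⟨⟨Nat.find hex, hi⟩, fun k => ⟨fun hak => ?_, Nat.find_spec hex k⟩⟩
  exact Nat.find_min' hex fun _ hk' => hak.trans (hf hk')

theorem exists_cell_le_iff {p : ℕ} {n : Fin p → ℕ} {h : ∀ j, Fin (n j) → ℝ}
    (hmono : ∀ j, Monotone (h j)) (x : Fin p → ℝ) :
    ∃ z : Cell n, ∀ j k, x j ≤ h j k ↔ (z j : ℕ) ≤ k := by
  choose z hz using fun j => (hmono j).exists_forall_le_apply_iff_le (x j)
  exact ⟨z, hz⟩

theorem le_iff_of_mem_Box {p : ℕ} {n : Fin p → ℕ} {h : ∀ j, Fin (n j) → ℝ} {z : Cell n}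
    {y : Fin p → ℝ} (hy : y ∈ Box n h z) (j : Fin p) (k : Fin (n j)) :
    y j ≤ h j k ↔ (z j : ℕ) ≤ k :=
  ⟨fun hyk => not_lt.mp fun hk => (hyk.trans_lt ((hy j).1 k hk)).false,
    fun hk => ((hy j).2 k hk).le⟩

/-- Let `h j` be the increasing enumeration of the ensemble's threshold set
`H j` for each feature `j`, and let `T` be a decision tree all of whose splits use thresholds
from the sets `H j`. If for every cell `z` there is at least one point `x` of the open box
`B(z)` with `F_T(x) = F_𝒯(x)`, then `T` is faithful to the ensemble on all of `ℝ^p`. -/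
theorem faithful_of_faithful_on_cells {p : ℕ} (E : Ensemble p) (n : Fin p → ℕ)
    (h : ∀ j, Fin (n j) → ℝ) (hmono : ∀ j, StrictMono (h j))
    (hcov : ∀ j, E.H j = Set.range (h j))
    (T : DTree p) (hTs : ∀ j : Fin p, ∀ t : ℝ, (j, t) ∈ T.splits → t ∈ E.H j)
    (hcell : ∀ z : Cell n, ∃ x ∈ Box n h z, T.eval x = E.F x) :
    Faithful T E Set.univ := by
  intro x _
  obtain ⟨z, hxz⟩ := exists_cell_le_iff (fun j => (hmono j).monotone) x
  obtain ⟨y, hyz, hTy⟩ := hcell z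
  have hxy : ∀ j, ∀ t ∈ E.H j, x j ≤ t ↔ y j ≤ t := by
    intro j t ht
    obtain ⟨k, rfl⟩ := hcov j ▸ ht
    rw [hxz, le_iff_of_mem_Box hyz]
  calc T.eval x = T.eval y :=
        T.eval_eq_of_forall_mem_splits fun s hs => hxy s.1 s.2 (hTs _ _ hs)
    _ = E.F y := hTy
    _ = E.F x := (E.F_eq_of_forall_mem_H hxy).symm
end

section
/- Let 𝒯 be a tree ensemble on ℝ^p, let (z^L,z^R) be a region, and let j be a feature and l a level with z^L_j ≤ l < z^R_j. If T_1 is a decision tree faithful to 𝒯 on the region (z^L, z^R_{jl}) and T_2 is a decision tree faithful to 𝒯 on the region (z^L_{jl}, z^R), then the decision tree whose root splits on feature j with threshold h_{j,l}, with left subtree T_1 and right subtree T_2, is faithful to 𝒯 on the region (z^L, z^R). -/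
theorem Faithful.mono {p : ℕ} {T : DTree p} {E : Ensemble p} {S S' : Set (Fin p → ℝ)}
    (hT : Faithful T E S') (hS : S ⊆ S') : Faithful T E S :=
  fun x hx => hT x (hS hx)

theorem Faithful.node {p : ℕ} {E : Ensemble p} {S : Set (Fin p → ℝ)} {j : Fin p} {t : ℝ}
    {T1 T2 : DTree p} (h1 : Faithful T1 E (S ∩ {x | x j ≤ t}))
    (h2 : Faithful T2 E (S ∩ {x | t < x j})) : Faithful (DTree.node j t T1 T2) E S := by
  intro x hx
  by_cases hxt : x j ≤ t
  · simpa [DTree.eval, hxt] using h1 x ⟨hx, hxt⟩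
  · simpa [DTree.eval, hxt] using h2 x ⟨hx, not_le.mp hxt⟩

section Cells

variable {p : ℕ} {n : Fin p → ℕ} {h : ∀ j, Fin (n j) → ℝ} {z zL zR : Cell n} {x : Fin p → ℝ}
  {j : Fin p} {l : Fin (n j)}

theorem coord_le_of_mem_box_of_le (hx : x ∈ Box n h z) (hxl : x j ≤ h j l) :
    (z j : ℕ) ≤ l :=
  not_lt.mp fun hlz => (hxl.trans_lt ((hx j).1 l hlz)).false

theorem lt_coord_of_mem_box_of_lt (hx : x ∈ Box n h z) (hxl : h j l < x j) :
    (l : ℕ) < z j :=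
  not_le.mp fun hzl => (hxl.trans ((hx j).2 l hzl)).false

theorem Encl.splitR (hz : Encl zL zR z) (hzl : (z j : ℕ) ≤ l) :
    Encl zL (splitR zR j l) z := by
  intro i
  rcases eq_or_ne i j with rfl | hij
  · simpa [_root_.splitR] using ⟨(hz i).1, hzl⟩
  · simpa [_root_.splitR, Function.update_of_ne hij] using hz i

theorem Encl.splitL (hz : Encl zL zR z) (hlz : (l : ℕ) < z j) :
    Encl (splitL zL j l) zR z := by
  intro i
  rcases eq_or_ne i j with rfl | hij
  · simpa [_root_.splitL] using ⟨hlz, (hz i).2⟩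
  · simpa [_root_.splitL, Function.update_of_ne hij] using hz i

theorem regionSet_inter_le_subset :
    RegionSet n h zL zR ∩ {x | x j ≤ h j l} ⊆ RegionSet n h zL (splitR zR j l) := by
  rintro x ⟨hx, hxl⟩
  obtain ⟨z, hz, hxz⟩ := Set.mem_iUnion₂.mp hx
  exact Set.mem_biUnion (hz.splitR (coord_le_of_mem_box_of_le hxz hxl)) hxz

theorem regionSet_inter_lt_subset :
    RegionSet n h zL zR ∩ {x | h j l < x j} ⊆ RegionSet n h (splitL zL j l) zR := by
  rintro x ⟨hx, hxl⟩
  obtain ⟨z, hz, hxz⟩ := Set.mem_iUnion₂.mp hx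
  exact Set.mem_biUnion (hz.splitL (lt_coord_of_mem_box_of_lt hxz hxl)) hxz

end Cells

theorem split_composition_faithful_general {p : ℕ} (E : Ensemble p) (n : Fin p → ℕ)
    (h : ∀ j, Fin (n j) → ℝ) (zL zR : Cell n) (j : Fin p) (l : Fin (n j)) (T1 T2 : DTree p)
    (h1 : Faithful T1 E (RegionSet n h zL (splitR zR j l)))
    (h2 : Faithful T2 E (RegionSet n h (splitL zL j l) zR)) :
    Faithful (DTree.node j (h j l) T1 T2) E (RegionSet n h zL zR) :=
  Faithful.node (h1.mono regionSet_inter_le_subset) (h2.mono regionSet_inter_lt_subset)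

/-- If `T₁` is faithful to the ensemble on the region `(zL, zR_{jl})` and
`T₂` is faithful on `(zL_{jl}, zR)`, then the tree splitting at the root on feature `j` with
threshold `h_{j,l}`, with left subtree `T₁` and right subtree `T₂`, is faithful on `(zL, zR)`. -/
theorem split_composition_faithful {p : ℕ} (E : Ensemble p) (n : Fin p → ℕ)
    (h : ∀ j, Fin (n j) → ℝ)
    (hmono : ∀ j, StrictMono (h j)) (hcov : ∀ j, E.H j = Set.range (h j))
    (zL zR : Cell n) (hreg : ∀ j, (zL j : ℕ) ≤ (zR j : ℕ))
    (j : Fin p) (l : Fin (n j)) (hl1 : (zL j : ℕ) ≤ (l : ℕ)) (hl2 : (l : ℕ) < (zR j : ℕ))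
    (T1 T2 : DTree p)
    (h1 : Faithful T1 E (RegionSet n h zL (splitR zR j l)))
    (h2 : Faithful T2 E (RegionSet n h (splitL zL j l) zR)) :
    Faithful (DTree.node j (h j l) T1 T2) E (RegionSet n h zL zR) :=
  split_composition_faithful_general E n h zL zR j l T1 T2 h1 h2
end

section
/- Let 𝒯 be a tree ensemble on ℝ^p, (z^L,z^R) a region, j a feature and l a level with z^L_j ≤ l < z^R_j. (i) If Φ(z^L,z^R_{jl}) ≥ Φ(z^L_{jl},z^R), then for every l′ with l < l′ < z^R_j: 𝟙_{jl}(z^L,z^R) + max{Φ(z^L,z^R_{jl}), Φ(z^L_{jl},z^R)} ≤ 𝟙_{jl′}(z^L,z^R) + max{Φ(z^L,z^R_{jl′}), Φ(z^L_{jl′},z^R)}. (ii) If Φ(z^L,z^R_{jl}) ≤ Φ(z^L_{jl},z^R), then for every l′ with z^L_j ≤ l′ < l: 𝟙_{jl}(z^L,z^R) + max{Φ(z^L,z^R_{jl}), Φ(z^L_{jl},z^R)} ≤ 𝟙_{jl′}(z^L,z^R) + max{Φ(z^L,z^R_{jl′}), Φ(z^L_{jl′},z^R)}. -/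
/-!
Φ is monotone under inclusion of regions: a tree faithful on a region is faithful on every
subregion. This needs Φ to be a genuine minimum, i.e. some tree is faithful at all; indeed
grafting the trees of the ensemble one below the other yields a single tree that sees every
vote, hence computes `F_𝒯` everywhere. Moving the split level `l` up enlarges the left part
`(zL, zR_{jl})` and shrinks the right part `(zL_{jl}, zR)`. In case (i) the maximum at `l` is
attained by the left part, whose Φ only grows for `l' > l`; case (ii) is symmetric. Finally the
indicator can only vanish where both halves have Φ = 0, so it is monotone in the maximum.
-/

namespace DTree

variable {p : ℕ}

def graft : DTree p → (ℕ → DTree p) → DTree p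
  | leaf c, g => g c
  | node j t L R, g => node j t (L.graft g) (R.graft g)

theorem eval_graft (T : DTree p) (g : ℕ → DTree p) (x : Fin p → ℝ) :
    (T.graft g).eval x = (g (T.eval x)).eval x := by
  induction T with
  | leaf c => rfl
  | node j t L R ihL ihR =>
    simp only [graft, eval]
    split_ifs <;> assumption

theorem exists_eval_eq_comp {m : ℕ} (t : Fin m → DTree p) (f : (Fin m → ℕ) → ℕ) :
    ∃ T : DTree p, ∀ x, T.eval x = f (fun i => (t i).eval x) := by
  induction m with
  | zero => exact ⟨leaf (f Fin.elim0), fun x => congrArg f (Subsingleton.elim _ _)⟩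
  | succ m ih =>
    choose T hT using fun c => ih (fun i => t i.succ) (fun v => f (Fin.cons c v))
    refine ⟨(t 0).graft T, fun x => ?_⟩
    rw [eval_graft, hT]
    exact congrArg f (Fin.cons_self_tail fun i => (t i).eval x)

end DTree

namespace Ensemble

variable {p : ℕ}

theorem exists_eval_eq_F (E : Ensemble p) : ∃ T : DTree p, ∀ x, T.eval x = E.F x :=
  -- `E.F x` unfolds to this function of the votes `(E.tree i).eval x`.
  DTree.exists_eval_eq_comp E.tree fun v =>
    sInf {c : ℕ | ∀ c', ∑ i ∈ Finset.univ.filter (fun i => v i = c'), E.weight i ≤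
      ∑ i ∈ Finset.univ.filter (fun i => v i = c), E.weight i}

theorem exists_faithful (E : Ensemble p) (S : Set (Fin p → ℝ)) : ∃ T : DTree p, Faithful T E S :=
  let ⟨T, hT⟩ := E.exists_eval_eq_F
  ⟨T, fun x _ => hT x⟩

end Ensemble

section Region

variable {p : ℕ} {E : Ensemble p} {n : Fin p → ℕ} {h : ∀ j, Fin (n j) → ℝ}

theorem Phi_le_of_subset {zL zR zL' zR' : Cell n}
    (hsub : RegionSet n h zL' zR' ⊆ RegionSet n h zL zR) :
    Phi E n h zL' zR' ≤ Phi E n h zL zR := by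
  obtain ⟨T₀, hT₀⟩ := E.exists_faithful (RegionSet n h zL zR)
  obtain ⟨T, hT, hdepth⟩ := Nat.sInf_mem
    (s := {d | ∃ T : DTree p, Faithful T E (RegionSet n h zL zR) ∧ T.depth = d})
    ⟨T₀.depth, T₀, hT₀, rfl⟩
  exact Nat.sInf_le ⟨T, fun x hx => hT x (hsub hx), hdepth⟩

theorem RegionSet_mono {zL zR zL' zR' : Cell n}
    (hL : ∀ j, (zL j : ℕ) ≤ (zL' j : ℕ)) (hR : ∀ j, (zR' j : ℕ) ≤ (zR j : ℕ)) :
    RegionSet n h zL' zR' ⊆ RegionSet n h zL zR := by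
  simp only [RegionSet, Set.iUnion_subset_iff]
  intro z hz
  exact Set.subset_biUnion_of_mem (u := Box n h) fun j =>
    ⟨(hL j).trans (hz j).1, (hz j).2.trans (hR j)⟩

variable (zL zR : Cell n) (j : Fin p)

theorem Phi_splitR_mono {l l' : Fin (n j)} (hll' : l ≤ l') :
    Phi E n h zL (splitR zR j l) ≤ Phi E n h zL (splitR zR j l') := by
  refine Phi_le_of_subset (RegionSet_mono (fun _ => le_rfl) fun i => ?_)
  rcases eq_or_ne i j with rfl | hne
  · simpa [splitR] using hll'
  · simp [splitR, Function.update_of_ne hne]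

theorem Phi_splitL_anti {l l' : Fin (n j)} (hll' : l ≤ l') :
    Phi E n h (splitL zL j l') zR ≤ Phi E n h (splitL zL j l) zR := by
  refine Phi_le_of_subset (RegionSet_mono (fun i => ?_) fun _ => le_rfl)
  rcases eq_or_ne i j with rfl | hne
  · simpa [splitL] using hll'
  · simp [splitL, Function.update_of_ne hne]

theorem ind_le_of_max_le {l l' : Fin (n j)}
    (hmax : max (Phi E n h zL (splitR zR j l)) (Phi E n h (splitL zL j l) zR) ≤
      max (Phi E n h zL (splitR zR j l')) (Phi E n h (splitL zL j l') zR)) :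
    ind E n h zL zR j l ≤ ind E n h zL zR j l' := by
  unfold ind
  by_cases hl' : Phi E n h zL (splitR zR j l') = 0 ∧ Phi E n h (splitL zL j l') zR = 0 ∧
      SameClass E n h zL zR
  · have hl : Phi E n h zL (splitR zR j l) = 0 ∧ Phi E n h (splitL zL j l) zR = 0 ∧
        SameClass E n h zL zR := ⟨by omega, by omega, hl'.2.2⟩
    rw [if_pos hl, if_pos hl']
  · rw [if_neg hl']
    split_ifs <;> omega

theorem ind_add_max_le_of_max_le {l l' : Fin (n j)}
    (hmax : max (Phi E n h zL (splitR zR j l)) (Phi E n h (splitL zL j l) zR) ≤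
      max (Phi E n h zL (splitR zR j l')) (Phi E n h (splitL zL j l') zR)) :
    ind E n h zL zR j l + max (Phi E n h zL (splitR zR j l)) (Phi E n h (splitL zL j l) zR) ≤
      ind E n h zL zR j l' +
        max (Phi E n h zL (splitR zR j l')) (Phi E n h (splitL zL j l') zR) :=
  add_le_add (ind_le_of_max_le zL zR j hmax) hmax

end Region

theorem binary_search_dominance_general {p : ℕ} (E : Ensemble p) (n : Fin p → ℕ)
    (h : ∀ j, Fin (n j) → ℝ)
    (zL zR : Cell n)
    (j : Fin p) (l : Fin (n j)) :
    (Phi E n h (splitL zL j l) zR ≤ Phi E n h zL (splitR zR j l) →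
      ∀ l' : Fin (n j), (l : ℕ) < (l' : ℕ) → (l' : ℕ) < (zR j : ℕ) →
        ind E n h zL zR j l +
            max (Phi E n h zL (splitR zR j l)) (Phi E n h (splitL zL j l) zR) ≤
          ind E n h zL zR j l' +
            max (Phi E n h zL (splitR zR j l')) (Phi E n h (splitL zL j l') zR)) ∧
    (Phi E n h zL (splitR zR j l) ≤ Phi E n h (splitL zL j l) zR →
      ∀ l' : Fin (n j), (zL j : ℕ) ≤ (l' : ℕ) → (l' : ℕ) < (l : ℕ) →
        ind E n h zL zR j l +
            max (Phi E n h zL (splitR zR j l)) (Phi E n h (splitL zL j l) zR) ≤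
          ind E n h zL zR j l' +
            max (Phi E n h zL (splitR zR j l')) (Phi E n h (splitL zL j l') zR)) := by
  constructor
  · intro hleft l' hll' _
    refine ind_add_max_le_of_max_le zL zR j ?_
    rw [max_eq_left hleft]
    exact (Phi_splitR_mono zL zR j hll'.le).trans (le_max_left _ _)
  · intro hright l' _ hl'l
    refine ind_add_max_le_of_max_le zL zR j ?_
    rw [max_eq_right hright]
    exact (Phi_splitL_anti zL zR j hl'l.le).trans (le_max_right _ _)

/-- **Theorem 4.** (i) If `Φ(zL, zR_{jl}) ≥ Φ(zL_{jl}, zR)` then for every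
level `l' > l` the split value at `l` is no worse than at `l'`. (ii) Symmetrically, if
`Φ(zL, zR_{jl}) ≤ Φ(zL_{jl}, zR)` then the same holds for every level `l' < l`. -/
theorem binary_search_dominance {p : ℕ} (E : Ensemble p) (n : Fin p → ℕ)
    (h : ∀ j, Fin (n j) → ℝ)
    (hmono : ∀ j, StrictMono (h j)) (hcov : ∀ j, E.H j = Set.range (h j))
    (zL zR : Cell n) (hreg : ∀ j, (zL j : ℕ) ≤ (zR j : ℕ))
    (j : Fin p) (l : Fin (n j)) (hl1 : (zL j : ℕ) ≤ (l : ℕ)) (hl2 : (l : ℕ) < (zR j : ℕ)) :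
    (Phi E n h (splitL zL j l) zR ≤ Phi E n h zL (splitR zR j l) →
      ∀ l' : Fin (n j), (l : ℕ) < (l' : ℕ) → (l' : ℕ) < (zR j : ℕ) →
        ind E n h zL zR j l +
            max (Phi E n h zL (splitR zR j l)) (Phi E n h (splitL zL j l) zR) ≤
          ind E n h zL zR j l' +
            max (Phi E n h zL (splitR zR j l')) (Phi E n h (splitL zL j l') zR)) ∧
    (Phi E n h zL (splitR zR j l) ≤ Phi E n h (splitL zL j l) zR →
      ∀ l' : Fin (n j), (zL j : ℕ) ≤ (l' : ℕ) → (l' : ℕ) < (l : ℕ) →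
        ind E n h zL zR j l +
            max (Phi E n h zL (splitR zR j l)) (Phi E n h (splitL zL j l) zR) ≤
          ind E n h zL zR j l' +
            max (Phi E n h zL (splitR zR j l')) (Phi E n h (splitL zL j l') zR)) :=
  binary_search_dominance_general E n h zL zR j l
end

section
/- Let P be a 3-CNF propositional formula with k ≥ 1 clauses over variables x_1,…,x_l, and let 𝒯_P be the associated tree ensemble on ℝ^l. Then for every x ∈ ℝ^l, F_{𝒯_P}(x) = 1 if and only if the boolean assignment ν_x satisfies P. Consequently, P is satisfiable if and only if there exists x ∈ ℝ^l with F_{𝒯_P}(x) = 1. -/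
/-- A 3-clause over boolean variables indexed by `Fin l`: three literals on three distinct
variables, each literal given by a variable `var i` and a polarity `sign i`
(`true` for a positive literal). -/
structure Clause (l : ℕ) : Type where
  var : Fin 3 → Fin l
  var_inj : Function.Injective var
  sign : Fin 3 → Bool

/-- A boolean assignment `ν` satisfies the clause iff some literal is satisfied. -/
def Clause.sat {l : ℕ} (C : Clause l) (ν : Fin l → Bool) : Prop :=
  ∃ i : Fin 3, ν (C.var i) = C.sign i

/-- The assignment `ν_x` encoded by `x ∈ ℝ^l` (`ν_x(i) = true` iff `x i > 1/2`) satisfies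
the clause. -/
def Clause.satAt {l : ℕ} (C : Clause l) (x : Fin l → ℝ) : Prop :=
  ∃ i : Fin 3, (C.sign i = true ↔ 1 / 2 < x (C.var i))

/-- A 3-CNF formula with `k ≥ 1` clauses over variables indexed by `Fin l`. -/
structure CNF (l : ℕ) : Type where
  k : ℕ
  k_pos : 0 < k
  clause : Fin k → Clause l

/-- A boolean assignment satisfies the formula iff it satisfies every clause. -/
def CNF.sat {l : ℕ} (P : CNF l) (ν : Fin l → Bool) : Prop :=
  ∀ i, (P.clause i).sat ν

/-- The assignment `ν_x` encoded by `x ∈ ℝ^l` satisfies the formula. -/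
def CNF.satAt {l : ℕ} (P : CNF l) (x : Fin l → ℝ) : Prop :=
  ∀ i, (P.clause i).satAt x

/-- Leaf of the clause tree corresponding to the assignment `a` of the three clause
variables: class `1` (True) unless `a` falsifies the clause, in which case class `0`. -/
def litLeaf {l : ℕ} (C : Clause l) (a : Fin 3 → Bool) : DTree l :=
  DTree.leaf (if ∃ i : Fin 3, a i = C.sign i then 1 else 0)

/-- The complete depth-3 decision tree of a clause: it splits successively on the three
variables of the clause, each with threshold `1/2` (left = False, right = True); its eight
leaves are labeled `1` except the unique leaf corresponding to the falsifying assignment,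
which is labeled `0`. -/
noncomputable def clauseTree {l : ℕ} (C : Clause l) : DTree l :=
  DTree.node (C.var 0) (1 / 2)
    (DTree.node (C.var 1) (1 / 2)
      (DTree.node (C.var 2) (1 / 2)
        (litLeaf C ![false, false, false]) (litLeaf C ![false, false, true]))
      (DTree.node (C.var 2) (1 / 2)
        (litLeaf C ![false, true, false]) (litLeaf C ![false, true, true])))
    (DTree.node (C.var 1) (1 / 2)
      (DTree.node (C.var 2) (1 / 2)
        (litLeaf C ![true, false, false]) (litLeaf C ![true, false, true]))
      (DTree.node (C.var 2) (1 / 2)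
        (litLeaf C ![true, true, false]) (litLeaf C ![true, true, true])))

/-- The tree ensemble `𝒯_P` associated with a 3-CNF formula `P` with `k` clauses:
`2k − 1` unit-weight trees, namely the `k` clause trees together with `k − 1` single-leaf
trees of class `0` (False). -/
noncomputable def cnfEnsemble {l : ℕ} (P : CNF l) : Ensemble l where
  m := 2 * P.k - 1
  m_pos := by have := P.k_pos; omega
  tree := fun i =>
    if h : (i : ℕ) < P.k then clauseTree (P.clause ⟨i, h⟩) else DTree.leaf 0
  weight := fun _ => 1
  weight_pos := fun _ => one_pos

/-! Each clause tree votes `1` exactly when `ν_x` satisfies its clause, and the `k - 1` constant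
trees vote `0`. If `u` clauses are falsified, class `0` gets `u + (k - 1)` votes and class `1`
gets `k - u`, so class `1` wins iff `u = 0`. -/

open Finset
open scoped Classical

namespace Ensemble

variable {p : ℕ} (E : Ensemble p) (x : Fin p → ℝ)

lemma score_nonneg (c : ℕ) : 0 ≤ E.score x c :=
  sum_nonneg fun i _ => (E.weight_pos i).le

lemma score_eq_zero_of_forall_eval_ne {c : ℕ} (h : ∀ i, (E.tree i).eval x ≠ c) :
    E.score x c = 0 := by
  rw [score, filter_false_of_mem fun i _ => h i, sum_empty]

lemma forall_score_le_iff_of_eval_le_one (hvote : ∀ i, (E.tree i).eval x ≤ 1) (c : ℕ) :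
    (∀ c', E.score x c' ≤ E.score x c) ↔
      E.score x 0 ≤ E.score x c ∧ E.score x 1 ≤ E.score x c := by
  refine ⟨fun h => ⟨h 0, h 1⟩, fun ⟨h0, h1⟩ c' => ?_⟩
  match c' with
  | 0 => exact h0
  | 1 => exact h1
  | c' + 2 =>
    rw [E.score_eq_zero_of_forall_eval_ne x fun i => by have := hvote i; omega]
    exact E.score_nonneg x c

theorem F_eq_one_iff_of_eval_le_one (hvote : ∀ i, (E.tree i).eval x ≤ 1) :
    E.F x = 1 ↔ E.score x 0 < E.score x 1 := by
  have hmax := E.forall_score_le_iff_of_eval_le_one x hvote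
  constructor
  · intro hF
    by_contra! hle
    have hF0 : E.F x = 0 := Nat.sInf_eq_zero.mpr (Or.inl ((hmax 0).2 ⟨le_rfl, hle⟩))
    omega
  · intro hlt
    refine IsLeast.csInf_eq ⟨(hmax 1).2 ⟨hlt.le, le_rfl⟩, fun c hc => ?_⟩
    refine Nat.one_le_iff_ne_zero.mpr ?_
    rintro rfl
    exact (hc 1).not_gt hlt

end Ensemble

noncomputable def assignmentOf {l : ℕ} (x : Fin l → ℝ) : Fin l → Bool :=
  fun j => decide (1 / 2 < x j)

lemma Clause.satAt_iff_sat {l : ℕ} (C : Clause l) (x : Fin l → ℝ) :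
    C.satAt x ↔ C.sat (assignmentOf x) := by
  refine exists_congr fun i => ?_
  cases C.sign i <;> simp [assignmentOf]

lemma CNF.satAt_iff_sat {l : ℕ} (P : CNF l) (x : Fin l → ℝ) :
    P.satAt x ↔ P.sat (assignmentOf x) :=
  forall_congr' fun i => (P.clause i).satAt_iff_sat x

lemma assignmentOf_indicator {l : ℕ} (ν : Fin l → Bool) :
    assignmentOf (fun j => if ν j then 1 else 0) = ν := by
  funext j
  cases h : ν j <;> norm_num [assignmentOf, h]

lemma CNF.exists_sat_iff_exists_satAt {l : ℕ} (P : CNF l) :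
    (∃ ν, P.sat ν) ↔ ∃ x, P.satAt x := by
  simp only [P.satAt_iff_sat]
  exact ⟨fun ⟨ν, hν⟩ => ⟨_, (assignmentOf_indicator ν).symm ▸ hν⟩,
    fun ⟨x, hx⟩ => ⟨_, hx⟩⟩

lemma DTree.eval_node_half {l : ℕ} (j : Fin l) (L R : DTree l) (x : Fin l → ℝ) :
    (DTree.node j (1 / 2) L R).eval x = if assignmentOf x j then R.eval x else L.eval x := by
  rw [DTree.eval]
  simp only [assignmentOf, decide_eq_true_eq, ← not_lt, ite_not]

lemma clauseTree_eval_eq_litLeaf {l : ℕ} (C : Clause l) (x : Fin l → ℝ) :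
    (clauseTree C).eval x = (litLeaf C (assignmentOf x ∘ C.var)).eval x := by
  have h : assignmentOf x ∘ C.var =
      ![assignmentOf x (C.var 0), assignmentOf x (C.var 1), assignmentOf x (C.var 2)] := by
    funext i; fin_cases i <;> rfl
  simp only [clauseTree, DTree.eval_node_half, h]
  cases assignmentOf x (C.var 0) <;> cases assignmentOf x (C.var 1) <;>
    cases assignmentOf x (C.var 2) <;> rfl

lemma clauseTree_eval {l : ℕ} (C : Clause l) (x : Fin l → ℝ) :
    (clauseTree C).eval x = if C.satAt x then 1 else 0 := by
  rw [clauseTree_eval_eq_litLeaf, C.satAt_iff_sat]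
  simp only [litLeaf, DTree.eval, Clause.sat, Function.comp_apply]
  congr -- the two sides differ only in their `Decidable` instances

section cnfEnsemble

variable {l : ℕ} (P : CNF l) (x : Fin l → ℝ)

lemma cnfEnsemble_eval_le_one (i : Fin (cnfEnsemble P).m) :
    ((cnfEnsemble P).tree i).eval x ≤ 1 := by
  simp only [cnfEnsemble]
  split_ifs
  · rw [clauseTree_eval]; split_ifs <;> simp
  · simp [DTree.eval]

lemma cnfEnsemble_score (c : ℕ) :
    (cnfEnsemble P).score x c =
      (#{j | (clauseTree (P.clause j)).eval x = c} + if c = 0 then P.k - 1 else 0 : ℕ) := by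
  have hm : P.k + (P.k - 1) = (cnfEnsemble P).m := by
    have := P.k_pos; simp only [cnfEnsemble]; omega
  rw [Ensemble.score, sum_filter, ← Fin.sum_congr' _ hm, Fin.sum_univ_add]
  have hclause : ∀ j : Fin P.k, (cnfEnsemble P).tree ((Fin.castAdd (P.k - 1) j).cast hm) =
      clauseTree (P.clause j) := fun j => dif_pos j.isLt
  have hleaf : ∀ j : Fin (P.k - 1), (cnfEnsemble P).tree ((Fin.natAdd P.k j).cast hm) =
      DTree.leaf 0 := fun j => dif_neg (by simp)
  have hweight : ∀ i, (cnfEnsemble P).weight i = 1 := fun _ => rfl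
  simp only [hclause, hleaf, hweight, DTree.eval, sum_boole, eq_comm (a := 0)]
  push_cast
  split_ifs with hc <;> simp [hc]

lemma cnfEnsemble_score_zero_lt_score_one_iff :
    (cnfEnsemble P).score x 0 < (cnfEnsemble P).score x 1 ↔ P.satAt x := by
  have hone : ∀ j, (clauseTree (P.clause j)).eval x = 1 ↔ (P.clause j).satAt x := fun j => by
    rw [clauseTree_eval]; split_ifs <;> simp [*]
  have hzero : ∀ j, (clauseTree (P.clause j)).eval x = 0 ↔ ¬(P.clause j).satAt x := fun j => by
    rw [clauseTree_eval]; split_ifs <;> simp [*]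
  have hsplit := card_filter_add_card_filter_not (s := univ) (fun j => (P.clause j).satAt x)
  have hunsat : #{j | ¬(P.clause j).satAt x} = 0 ↔ P.satAt x := by
    simp [filter_eq_empty_iff, CNF.satAt]
  rw [card_univ, Fintype.card_fin] at hsplit
  simp only [cnfEnsemble_score, if_true, one_ne_zero, if_false, add_zero, Nat.cast_lt]
  rw [filter_congr fun j _ => hone j, filter_congr fun j _ => hzero j, ← hunsat]
  have := P.k_pos
  omega

end cnfEnsemble

/-- For every `x ∈ ℝ^l`, `F_{𝒯_P}(x) = 1` iff the boolean assignment
encoded by `x` satisfies `P`; consequently `P` is satisfiable iff there exists `x` with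
`F_{𝒯_P}(x) = 1`. -/
theorem cnf_ensemble_decision_function {l : ℕ} (P : CNF l) :
    (∀ x : Fin l → ℝ, ((cnfEnsemble P).F x = 1 ↔ P.satAt x)) ∧
    ((∃ ν : Fin l → Bool, P.sat ν) ↔ ∃ x : Fin l → ℝ, (cnfEnsemble P).F x = 1) := by
  have hF : ∀ x, (cnfEnsemble P).F x = 1 ↔ P.satAt x := fun x => by
    rw [Ensemble.F_eq_one_iff_of_eval_le_one _ _ (cnfEnsemble_eval_le_one P x),
      cnfEnsemble_score_zero_lt_score_one_iff]
  exact ⟨hF, P.exists_sat_iff_exists_satAt.trans (exists_congr fun x => (hF x).symm)⟩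
end
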